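/- Let p ∈ (1, ∞) and θ ∈ (max{0, (p−2)/(2p−2)}, 1). There exists a constant C = C(p, θ) > 0 such that for every nonnegative ω ∈ L¹ ∩ L^p(ℝ²₊) and every x = (x₁, x₂) ∈ ℝ²₊, the stream function satisfies ψ[ω](x) := ∫_{ℝ²₊} G(x, y) ω(y) dy ≤ C · x₂^{2(1−θ)(1−1/p)} · ‖ω‖_{L¹}^θ · ‖ω‖_{L^p}^{1−θ}. -/

import Mathlib

/-!
The kernel is dominated by `(2π)⁻¹ log (1 + 2 x₂ / |x - y|)`. In polar coordinates around `x`,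
the `q'`-th power of this logarithm integrates to `O(x₂²)` as soon as `q' > 2`: the logarithm is
`O((x₂ / r) ^ (1 / q'))` for `r ≤ 2 x₂` and `O(x₂ / r)` beyond. Hölder's inequality with the
exponents `q'` and `q`, `1 / q = θ + (1 - θ) / p`, gives `ψ(x) ≤ O(x₂ ^ (2 / q')) ‖ω‖_q`, and
interpolation gives `‖ω‖_q ≤ ‖ω‖₁ ^ θ ‖ω‖_p ^ (1 - θ)`. The lower bound on `θ` is exactly
`q' > 2`, and `2 / q' = 2 (1 - θ) (1 - 1 / p)`.
-/

open MeasureTheory Real Set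

noncomputable def G (x y : ℝ × ℝ) : ℝ :=
  (1 / (4 * π)) * Real.log (1 + 4 * x.2 * y.2 / ((x.1 - y.1)^2 + (x.2 - y.2)^2))

def upperHalf : Set (ℝ × ℝ) := {y : ℝ × ℝ | 0 < y.2}

open scoped ENNReal

theorem log_rpow_le_rpow_mul {x q : ℝ} (hx : 1 ≤ x) (hq : 0 < q) : log x ^ q ≤ q ^ q * x := by
  have hlog : log x ≤ q * x ^ q⁻¹ := by
    simpa [div_inv_eq_mul, mul_comm] using log_le_rpow_div (by linarith) (inv_pos.2 hq)
  calc log x ^ q ≤ (q * x ^ q⁻¹) ^ q := by gcongr; exact log_nonneg hx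
    _ = q ^ q * x := by
      rw [mul_rpow hq.le (by positivity), ← rpow_mul (by linarith), inv_mul_cancel₀ hq.ne',
        rpow_one]

theorem lintegral_Ioi_mul_log_one_add_div_rpow_le {q b : ℝ} (hq : 2 < q) (hb : 0 < b) :
    ∫⁻ u in Ioi 0, ENNReal.ofReal u * ENNReal.ofReal (log (1 + b / u)) ^ q ≤
      ENNReal.ofReal ((2 * q ^ q + 1 / (q - 2)) * b ^ 2) := by
  have hq0 : 0 < q := by linarith
  have hofReal : ∀ u, 0 < u → ENNReal.ofReal u * ENNReal.ofReal (log (1 + b / u)) ^ q =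
      ENNReal.ofReal (u * log (1 + b / u) ^ q) := fun u hu => by
    rw [ENNReal.ofReal_rpow_of_nonneg (log_nonneg (le_add_of_nonneg_right (by positivity))) hq0.le,
      ENNReal.ofReal_mul hu.le]
  have hnear : ∀ u ∈ Ioc 0 b, ENNReal.ofReal u * ENNReal.ofReal (log (1 + b / u)) ^ q ≤
      ENNReal.ofReal (2 * q ^ q * b) := fun u ⟨hu, hub⟩ => by
    rw [hofReal u hu]
    refine ENNReal.ofReal_le_ofReal ?_
    calc u * log (1 + b / u) ^ q ≤ u * (q ^ q * (1 + b / u)) := by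
          gcongr; exact log_rpow_le_rpow_mul (le_add_of_nonneg_right (by positivity)) hq0
      _ = q ^ q * (u + b) := by field_simp
      _ ≤ 2 * q ^ q * b := by nlinarith [rpow_pos_of_pos hq0 q]
  have hfar : ∀ u ∈ Ioi b, ENNReal.ofReal u * ENNReal.ofReal (log (1 + b / u)) ^ q ≤
      ENNReal.ofReal (b ^ q * u ^ (1 - q)) := fun u (hu : b < u) => by
    have hu0 : 0 < u := hb.trans hu
    rw [hofReal u hu0]
    refine ENNReal.ofReal_le_ofReal ?_
    calc u * log (1 + b / u) ^ q ≤ u * (b / u) ^ q := by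
          gcongr
          · exact log_nonneg (le_add_of_nonneg_right (by positivity))
          · linarith [log_le_sub_one_of_pos (show 0 < 1 + b / u by positivity)]
      _ = b ^ q * u ^ (1 - q) := by
          rw [div_rpow hb.le hu0.le, rpow_sub hu0, rpow_one]; field_simp
  have htail : ∫⁻ u in Ioi b, ENNReal.ofReal (b ^ q * u ^ (1 - q)) =
      ENNReal.ofReal (1 / (q - 2) * b ^ 2) := by
    rw [← ofReal_integral_eq_lintegral_ofReal
        ((integrableOn_Ioi_rpow_of_lt (by linarith) hb).const_mul _)
        ((ae_restrict_iff' measurableSet_Ioi).2 (ae_of_all _ fun u (hu : b < u) =>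
          by have := hb.trans hu; positivity)),
      integral_const_mul, integral_Ioi_rpow_of_lt (by linarith) hb]
    congr 1
    have hpow : b ^ q * b ^ (1 - q + 1) = b ^ 2 := by
      rw [← rpow_add hb, show q + (1 - q + 1) = 2 by ring, rpow_two]
    rw [mul_div_assoc', mul_neg, hpow, show 1 - q + 1 = -(q - 2) by ring, neg_div_neg_eq]
    ring
  calc ∫⁻ u in Ioi 0, ENNReal.ofReal u * ENNReal.ofReal (log (1 + b / u)) ^ q
      ≤ (∫⁻ u in Ioc 0 b, ENNReal.ofReal u * ENNReal.ofReal (log (1 + b / u)) ^ q) +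
          ∫⁻ u in Ioi b, ENNReal.ofReal u * ENNReal.ofReal (log (1 + b / u)) ^ q := by
        rw [← Ioc_union_Ioi_eq_Ioi hb.le]; exact lintegral_union_le _ _ _
    _ ≤ (∫⁻ _ in Ioc 0 b, ENNReal.ofReal (2 * q ^ q * b)) +
          ∫⁻ u in Ioi b, ENNReal.ofReal (b ^ q * u ^ (1 - q)) :=
        add_le_add (setLIntegral_mono measurable_const hnear)
          (setLIntegral_mono (by fun_prop) hfar)
    _ = ENNReal.ofReal ((2 * q ^ q + 1 / (q - 2)) * b ^ 2) := by
        rw [setLIntegral_const, Real.volume_Ioc, sub_zero, htail,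
          ← ENNReal.ofReal_mul (by positivity), ← ENNReal.ofReal_add (by positivity)
            (mul_nonneg (one_div_nonneg.2 (by linarith)) (sq_nonneg b))]
        congr 1; ring

theorem lintegral_radial_eq_two_pi_mul (x : ℝ × ℝ) {f : ℝ → ℝ≥0∞} (hf : Measurable f) :
    ∫⁻ y : ℝ × ℝ, f √((y.1 - x.1) ^ 2 + (y.2 - x.2) ^ 2) =
      ENNReal.ofReal (2 * π) * ∫⁻ r in Ioi 0, ENNReal.ofReal r * f r := by
  have htrans :=
    lintegral_sub_right_eq_self (μ := volume) (fun z : ℝ × ℝ => f √(z.1 ^ 2 + z.2 ^ 2)) x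
  simp only [Prod.fst_sub, Prod.snd_sub] at htrans
  rw [htrans, ← lintegral_comp_polarCoord_symm]
  have hpolar : ∀ p ∈ polarCoord.target,
      ENNReal.ofReal p.1 • f √((polarCoord.symm p).1 ^ 2 + (polarCoord.symm p).2 ^ 2) =
        ENNReal.ofReal p.1 * f p.1 := by
    rintro ⟨r, φ⟩ ⟨hr, -⟩
    have : (r * cos φ) ^ 2 + (r * sin φ) ^ 2 = r ^ 2 := by
      linear_combination r ^ 2 * cos_sq_add_sin_sq φ
    simp [polarCoord_symm_apply, this, sqrt_sq hr.le]
  rw [setLIntegral_congr_fun polarCoord.open_target.measurableSet hpolar,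
    polarCoord_target, Measure.volume_eq_prod, ← Measure.prod_restrict,
    lintegral_prod _ (by fun_prop)]
  simp only [lintegral_const, Measure.restrict_apply_univ, Real.volume_Ioo]
  rw [lintegral_mul_const' _ _ ENNReal.ofReal_ne_top, mul_comm]
  ring_nf

theorem lintegral_rpow_le_interpolation {α : Type*} [MeasurableSpace α] {μ : Measure α}
    {g : α → ℝ≥0∞} (hg : AEMeasurable g μ) {p θ : ℝ} (hp : 0 < p) (hθ0 : 0 ≤ θ) (hθ1 : θ ≤ 1) :
    (∫⁻ a, g a ^ (θ + (1 - θ) / p)⁻¹ ∂μ) ^ (θ + (1 - θ) / p) ≤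
      (∫⁻ a, g a ∂μ) ^ θ * (∫⁻ a, g a ^ p ∂μ) ^ ((1 - θ) / p) := by
  set r := θ + (1 - θ) / p
  have hr : 0 < r := by
    rcases hθ0.eq_or_lt with rfl | hθ
    · simpa [r] using hp
    · have : 0 ≤ (1 - θ) / p := div_nonneg (by linarith) hp.le
      linarith
  have hsplit : ∀ a, g a ^ r⁻¹ = g a ^ (θ / r) * (g a ^ p) ^ ((1 - θ) / p / r) := fun a => by
    rw [← ENNReal.rpow_mul, ← ENNReal.rpow_add_of_nonneg _ _ (by positivity)
      (mul_nonneg hp.le (div_nonneg (div_nonneg (by linarith) hp.le) hr.le))]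
    congr 1
    field_simp
    ring
  have hHolder := ENNReal.lintegral_mul_norm_pow_le (p := θ / r) (q := (1 - θ) / p / r) hg
    (hg.pow_const p) (div_nonneg hθ0 hr.le) (div_nonneg (div_nonneg (by linarith) hp.le) hr.le)
    (by rw [← add_div, div_self hr.ne'])
  calc (∫⁻ a, g a ^ r⁻¹ ∂μ) ^ r
      ≤ ((∫⁻ a, g a ∂μ) ^ (θ / r) * (∫⁻ a, g a ^ p ∂μ) ^ ((1 - θ) / p / r)) ^ r := by
        simp_rw [hsplit]; exact ENNReal.rpow_le_rpow hHolder hr.le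
    _ = (∫⁻ a, g a ∂μ) ^ θ * (∫⁻ a, g a ^ p ∂μ) ^ ((1 - θ) / p) := by
        rw [ENNReal.mul_rpow_of_nonneg _ _ hr.le, ← ENNReal.rpow_mul, ← ENNReal.rpow_mul,
          div_mul_cancel₀ _ hr.ne', div_mul_cancel₀ _ hr.ne']

theorem measurableSet_upperHalf : MeasurableSet upperHalf :=
  measurableSet_lt measurable_const measurable_snd

theorem measurable_G (x : ℝ × ℝ) : Measurable (G x) := by
  unfold G; fun_prop

theorem G_nonneg {x y : ℝ × ℝ} (hx : 0 ≤ x.2) (hy : 0 ≤ y.2) : 0 ≤ G x y :=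
  mul_nonneg (by positivity) (log_nonneg (le_add_of_nonneg_right (by positivity)))

theorem G_le_log_one_add_div {x y : ℝ × ℝ} (hx : 0 ≤ x.2) (hy : 0 ≤ y.2) :
    G x y ≤ (2 * π)⁻¹ * log (1 + 2 * x.2 / √((y.1 - x.1) ^ 2 + (y.2 - x.2) ^ 2)) := by
  have hD : (x.1 - y.1) ^ 2 + (x.2 - y.2) ^ 2 = (y.1 - x.1) ^ 2 + (y.2 - x.2) ^ 2 := by ring
  rw [G, hD]
  set D := (y.1 - x.1) ^ 2 + (y.2 - x.2) ^ 2
  rcases (show 0 ≤ D by positivity).eq_or_lt with hD0 | hD0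
  · -- at `y = x` both sides vanish, since `a / 0 = 0`
    simp [← hD0]
  set s := √D
  have hs : 0 < s := sqrt_pos.2 hD0
  have hsD : s ^ 2 = D := sq_sqrt hD0.le
  have hys : y.2 - x.2 ≤ s :=
    (le_abs_self _).trans (abs_le_sqrt (by simp only [D]; nlinarith [sq_nonneg (y.1 - x.1)]))
  have hsq : 1 + 4 * x.2 * y.2 / D ≤ (1 + 2 * x.2 / s) ^ 2 := by
    have : (1 + 2 * x.2 / s) ^ 2 - (1 + 4 * x.2 * y.2 / D) = 4 * x.2 * (s + x.2 - y.2) / D := by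
      rw [← hsD]; field_simp; ring
    have : 0 ≤ 4 * x.2 * (s + x.2 - y.2) / D :=
      div_nonneg (mul_nonneg (by positivity) (by linarith)) hD0.le
    linarith
  calc 1 / (4 * π) * log (1 + 4 * x.2 * y.2 / D)
      ≤ 1 / (4 * π) * log ((1 + 2 * x.2 / s) ^ 2) := by
        gcongr
    _ = (2 * π)⁻¹ * log (1 + 2 * x.2 / s) := by
        rw [log_pow]; field_simp; ring

theorem lintegral_G_rpow_le {q : ℝ} (hq : 2 < q) {x : ℝ × ℝ} (hx : 0 < x.2) :
    ∫⁻ y in upperHalf, ENNReal.ofReal (G x y) ^ q ≤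
      ENNReal.ofReal (8 * π * (2 * q ^ q + 1 / (q - 2)) * x.2 ^ 2) := by
  have hG : ∀ y ∈ upperHalf, ENNReal.ofReal (G x y) ^ q ≤
      ENNReal.ofReal (log (1 + 2 * x.2 / √((y.1 - x.1) ^ 2 + (y.2 - x.2) ^ 2))) ^ q := by
    intro y (hy : 0 < y.2)
    have hlog : 0 ≤ log (1 + 2 * x.2 / √((y.1 - x.1) ^ 2 + (y.2 - x.2) ^ 2)) :=
      log_nonneg (le_add_of_nonneg_right (by positivity))
    have hπ : (2 * π)⁻¹ ≤ 1 := inv_le_one_of_one_le₀ (by linarith [pi_gt_three])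
    refine ENNReal.rpow_le_rpow (ENNReal.ofReal_le_ofReal ?_) (by linarith)
    exact (G_le_log_one_add_div hx.le hy.le).trans (mul_le_of_le_one_left hlog hπ)
  calc ∫⁻ y in upperHalf, ENNReal.ofReal (G x y) ^ q
      ≤ ∫⁻ y in upperHalf,
          ENNReal.ofReal (log (1 + 2 * x.2 / √((y.1 - x.1) ^ 2 + (y.2 - x.2) ^ 2))) ^ q :=
        setLIntegral_mono (by fun_prop) hG
    _ ≤ ∫⁻ y : ℝ × ℝ,
          ENNReal.ofReal (log (1 + 2 * x.2 / √((y.1 - x.1) ^ 2 + (y.2 - x.2) ^ 2))) ^ q :=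
        setLIntegral_le_lintegral _ _
    _ = ENNReal.ofReal (2 * π) *
          ∫⁻ r in Ioi 0, ENNReal.ofReal r * ENNReal.ofReal (log (1 + 2 * x.2 / r)) ^ q :=
        lintegral_radial_eq_two_pi_mul x (f := fun r => ENNReal.ofReal (log (1 + 2 * x.2 / r)) ^ q)
          (by fun_prop)
    _ ≤ ENNReal.ofReal (2 * π) * ENNReal.ofReal ((2 * q ^ q + 1 / (q - 2)) * (2 * x.2) ^ 2) := by
        gcongr; exact lintegral_Ioi_mul_log_one_add_div_rpow_le hq (by positivity)
    _ = ENNReal.ofReal (8 * π * (2 * q ^ q + 1 / (q - 2)) * x.2 ^ 2) := by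
        rw [← ENNReal.ofReal_mul (by positivity)]; ring_nf

theorem exists_lintegral_G_mul_le {p θ : ℝ} (hp : 1 < p)
    (hθl : max 0 ((p - 2) / (2 * p - 2)) < θ) (hθu : θ < 1) :
    ∃ C : ℝ, 0 < C ∧ ∀ g : ℝ × ℝ → ℝ≥0∞, AEMeasurable g (volume.restrict upperHalf) →
      ∀ x : ℝ × ℝ, 0 < x.2 →
        ∫⁻ y in upperHalf, ENNReal.ofReal (G x y) * g y ≤
          ENNReal.ofReal (C * x.2 ^ (2 * (1 - θ) * (1 - 1 / p))) *
            ((∫⁻ y in upperHalf, g y) ^ θ * (∫⁻ y in upperHalf, g y ^ p) ^ ((1 - θ) / p)) := by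
  have hθ0 : 0 < θ := (le_max_left _ _).trans_lt hθl
  set r := θ + (1 - θ) / p with hr
  have hr_half : 1 / 2 < r := by
    have hθp := (le_max_right _ _).trans_lt hθl
    rw [div_lt_iff₀ (by linarith)] at hθp
    have hdiff : r - 1 / 2 = (θ * (2 * p - 2) - (p - 2)) / (2 * p) := by
      rw [hr]; field_simp; ring
    have : 0 < (θ * (2 * p - 2) - (p - 2)) / (2 * p) := div_pos (by linarith) (by linarith)
    linarith
  have hr_one : r < 1 := by
    have : (1 - θ) / p < 1 - θ := div_lt_self (by linarith) hp
    linarith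
  set q' := (1 - r)⁻¹
  have hq' : 2 < q' := by
    rw [lt_inv_comm₀ (by norm_num) (by linarith)]; linarith
  have hconj : q'.HolderConjugate r⁻¹ :=
    Real.holderConjugate_iff.2 ⟨by linarith, by simp [q']⟩
  set K := 8 * π * (2 * q' ^ q' + 1 / (q' - 2))
  have hK : 0 < K := by
    have : 0 < q' - 2 := by linarith
    positivity
  refine ⟨K ^ (1 - r), by positivity, fun g hg x hx => ?_⟩
  have hexp : (K * x.2 ^ 2) ^ (1 - r) = K ^ (1 - r) * x.2 ^ (2 * (1 - θ) * (1 - 1 / p)) := by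
    rw [mul_rpow hK.le (by positivity), ← rpow_natCast, ← rpow_mul hx.le]
    congr 2
    rw [hr]; field_simp; ring
  calc ∫⁻ y in upperHalf, ENNReal.ofReal (G x y) * g y
      ≤ (∫⁻ y in upperHalf, ENNReal.ofReal (G x y) ^ q') ^ (1 / q') *
          (∫⁻ y in upperHalf, g y ^ r⁻¹) ^ (1 / r⁻¹) :=
        ENNReal.lintegral_mul_le_Lp_mul_Lq _ hconj (measurable_G x).ennreal_ofReal.aemeasurable hg
    _ ≤ ENNReal.ofReal (K * x.2 ^ 2) ^ (1 - r) *
          ((∫⁻ y in upperHalf, g y) ^ θ * (∫⁻ y in upperHalf, g y ^ p) ^ ((1 - θ) / p)) := by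
        rw [one_div, one_div, inv_inv, inv_inv]
        gcongr
        · exact lintegral_G_rpow_le hq' hx
        · exact lintegral_rpow_le_interpolation hg (by linarith) hθ0.le hθu.le
    _ = _ := by rw [ENNReal.ofReal_rpow_of_nonneg (by positivity) (by linarith), hexp]

theorem stream_function_pointwise_bound (p θ : ℝ) (hp : 1 < p)
    (hθl : max 0 ((p - 2) / (2 * p - 2)) < θ) (hθu : θ < 1) :
    ∃ C : ℝ, 0 < C ∧ ∀ ω : ℝ × ℝ → ℝ, (∀ y, 0 ≤ ω y) →
      IntegrableOn ω upperHalf → IntegrableOn (fun y => ω y ^ p) upperHalf →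
      ∀ x : ℝ × ℝ, 0 < x.2 →
        (∫ y in upperHalf, G x y * ω y) ≤
          C * x.2 ^ (2 * (1 - θ) * (1 - 1/p)) * (∫ y in upperHalf, ω y) ^ θ *
            ((∫ y in upperHalf, ω y ^ p) ^ (1/p)) ^ (1 - θ) := by
  obtain ⟨C, hC, hbound⟩ := exists_lintegral_G_mul_le hp hθl hθu
  refine ⟨C, hC, fun ω hω hω1 hωp x hx => ?_⟩
  have hθ0 : 0 ≤ θ := (le_max_left _ _).trans hθl.le
  have hA : 0 ≤ ∫ y in upperHalf, ω y :=
    setIntegral_nonneg measurableSet_upperHalf fun y _ => hω y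
  have hB : 0 ≤ ∫ y in upperHalf, ω y ^ p :=
    setIntegral_nonneg measurableSet_upperHalf fun y _ => rpow_nonneg (hω y) p
  have hA' := ofReal_integral_eq_lintegral_ofReal hω1 (ae_of_all _ hω)
  have hB' : ENNReal.ofReal (∫ y in upperHalf, ω y ^ p) =
      ∫⁻ y in upperHalf, ENNReal.ofReal (ω y) ^ p := by
    rw [ofReal_integral_eq_lintegral_ofReal hωp (ae_of_all _ fun y => rpow_nonneg (hω y) p)]
    simp_rw [ENNReal.ofReal_rpow_of_nonneg (hω _) (by linarith : 0 ≤ p)]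
  rw [integral_eq_lintegral_of_nonneg_ae (ae_restrict_of_forall_mem measurableSet_upperHalf
      fun y (hy : 0 < y.2) => mul_nonneg (G_nonneg hx.le hy.le) (hω y))
    ((measurable_G x).aestronglyMeasurable.mul hω1.aestronglyMeasurable)]
  refine ENNReal.toReal_le_of_le_ofReal (by positivity) ?_
  calc ∫⁻ y in upperHalf, ENNReal.ofReal (G x y * ω y)
      = ∫⁻ y in upperHalf, ENNReal.ofReal (G x y) * ENNReal.ofReal (ω y) :=
        setLIntegral_congr_fun measurableSet_upperHalf fun y (hy : 0 < y.2) =>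
          ENNReal.ofReal_mul (G_nonneg hx.le hy.le)
    _ ≤ _ := hbound _ hω1.aemeasurable.ennreal_ofReal x hx
    _ = _ := by
      rw [← hA', ← hB', ENNReal.ofReal_rpow_of_nonneg hA hθ0,
        ENNReal.ofReal_rpow_of_nonneg hB (div_nonneg (by linarith) (by linarith)),
        ← ENNReal.ofReal_mul (by positivity), ← ENNReal.ofReal_mul (by positivity),
        ← rpow_mul hB]
      congr 1
      ring_nf
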